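/- For n ≥ 16, the rainbow saturation number of P_4 satisfies sat*(n, P_4) ≤ (4/5)n + 16. -/

import Mathlib

open SimpleGraph

/-- A proper edge coloring: edges sharing a vertex get distinct colors. -/
def IsProperEdgeColoring {V : Type*} {α : Type*} (G : SimpleGraph V) (c : Sym2 V → α) : Prop :=
  ∀ e ∈ G.edgeSet, ∀ f ∈ G.edgeSet, e ≠ f → (∃ x, x ∈ e ∧ x ∈ f) → c e ≠ c f

/-- A rainbow copy of `H` in `G` under the coloring `c`: an injective homomorphism whose
edge images receive pairwise distinct colors. -/
def HasRainbowCopy {W V : Type*} {α : Type*} (H : SimpleGraph W) (G : SimpleGraph V)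
    (c : Sym2 V → α) : Prop :=
  ∃ f : H →g G, Function.Injective f ∧
    ∀ e ∈ H.edgeSet, ∀ e' ∈ H.edgeSet, e ≠ e' → c (Sym2.map f e) ≠ c (Sym2.map f e')

/-- The graph `G` with the extra edge `xy`. -/
def addEdge {V : Type*} (G : SimpleGraph V) (x y : V) : SimpleGraph V :=
  G ⊔ SimpleGraph.fromEdgeSet {s(x, y)}

/-- `G` is rainbow `H`-saturated. -/
def RainbowSaturated {V W : Type*} (G : SimpleGraph V) (H : SimpleGraph W) : Prop :=
  (∃ c : Sym2 V → ℕ, IsProperEdgeColoring G c ∧ ¬ HasRainbowCopy H G c) ∧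
  ∀ x y : V, x ≠ y → ¬ G.Adj x y →
    ∀ c : Sym2 V → ℕ, IsProperEdgeColoring (addEdge G x y) c →
      HasRainbowCopy H (addEdge G x y) c

/-- The rainbow saturation number: the least number of edges of an `n`-vertex
rainbow `H`-saturated graph. -/
noncomputable def rainbowSatNum {W : Type*} (n : ℕ) (H : SimpleGraph W) : ℕ :=
  sInf {m | ∃ G : SimpleGraph (Fin n), RainbowSaturated G H ∧ G.edgeSet.ncard = m}

/-!
A spanning forest of stars `K_{1,k}` with `k ≥ 4` contains no `P₄` at all. Adding an edge `xy`
creates a path `u - v - a` (`y - x - a` if `x` is a leaf with centre `a`, or `y' - y - x` through a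
leaf `y'` of `y` if both are centres) where `a` still has two leaves `b, b'` off the path; the
proper colouring gives `ab` and `ab'` different colours, so one of `u - v - a - b`,
`u - v - a - b'` is rainbow. Cutting `{0, …, n - 1}` into blocks of five, with the at most four
remaining vertices added to the last block, gives such a forest with `n - ⌊n / 5⌋` edges.
-/

open Set

lemma pathGraph_four_edgeSet :
    (pathGraph 4).edgeSet = {s(0, 1), s(1, 2), s(2, 3)} := by
  ext e
  induction e using Sym2.ind with
  | _ a b =>
    simp only [mem_edgeSet, pathGraph_adj, mem_insert_iff, mem_singleton_iff]
    revert a b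
    decide

lemma hasRainbowCopy_pathGraph_four {V α : Type*} {G : SimpleGraph V} {c : Sym2 V → α}
    (hc : IsProperEdgeColoring G c) {v₀ v₁ v₂ v₃ : V}
    (h₀₁ : G.Adj v₀ v₁) (h₁₂ : G.Adj v₁ v₂) (h₂₃ : G.Adj v₂ v₃)
    (h₀₂ : v₀ ≠ v₂) (h₀₃ : v₀ ≠ v₃) (h₁₃ : v₁ ≠ v₃) (hcol : c s(v₀, v₁) ≠ c s(v₂, v₃)) :
    HasRainbowCopy (pathGraph 4) G c := by
  have c₁ : c s(v₀, v₁) ≠ c s(v₁, v₂) :=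
    hc _ h₀₁ _ h₁₂ (by simp [h₀₁.ne, h₀₂]) ⟨v₁, by simp, by simp⟩
  have c₂ : c s(v₁, v₂) ≠ c s(v₂, v₃) :=
    hc _ h₁₂ _ h₂₃ (by simp [h₁₂.ne, h₁₃]) ⟨v₂, by simp, by simp⟩
  let f : pathGraph 4 →g G :=
    ⟨![v₀, v₁, v₂, v₃], fun {i j} hij => by
      fin_cases i <;> fin_cases j <;> simp_all [pathGraph_adj, h₀₁.symm, h₁₂.symm, h₂₃.symm]⟩
  refine ⟨f, ?_, ?_⟩
  · intro i j hij
    fin_cases i <;> fin_cases j <;> simp_all [f, h₀₁.ne, h₁₂.ne, h₂₃.ne, h₀₁.ne.symm, h₁₂.ne.symm,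
      h₂₃.ne.symm, h₀₂.symm, h₀₃.symm, h₁₃.symm]
  · simp only [pathGraph_four_edgeSet, mem_insert_iff, mem_singleton_iff]
    rintro e (rfl | rfl | rfl) e' (rfl | rfl | rfl) hne <;>
      simp_all [f, Ne.symm]

lemma hasRainbowCopy_pathGraph_four_of_fork {V α : Type*} {G : SimpleGraph V} {c : Sym2 V → α}
    (hc : IsProperEdgeColoring G c) {u v a b b' : V} (huv : G.Adj u v) (hva : G.Adj v a)
    (hua : u ≠ a) (hab : G.Adj a b) (hab' : G.Adj a b') (hbb' : b ≠ b')
    (hbu : b ≠ u) (hbv : b ≠ v) (hb'u : b' ≠ u) (hb'v : b' ≠ v) :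
    HasRainbowCopy (pathGraph 4) G c := by
  have hcol : c s(a, b) ≠ c s(a, b') :=
    hc _ hab _ hab' (by simp [hbb', hab.ne']) ⟨a, by simp, by simp⟩
  by_cases h : c s(u, v) = c s(a, b)
  · exact hasRainbowCopy_pathGraph_four hc huv hva hab' hua hb'u.symm hb'v.symm (h ▸ hcol)
  · exact hasRainbowCopy_pathGraph_four hc huv hva hab hua hbu.symm hbv.symm h

lemma exists_pair_mem_of_four_le_encard {α : Type*} {s : Set α} (hs : 4 ≤ s.encard) (x y : α) :
    ∃ b ∈ s, ∃ b' ∈ s, b ≠ b' ∧ b ≠ x ∧ b ≠ y ∧ b' ≠ x ∧ b' ≠ y := by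
  have hxy : ({x, y} : Set α).encard ≤ 2 := (encard_insert_le _ _).trans (by simp; norm_num)
  have hdiff : 1 < (s \ {x, y}).encard := by
    by_contra! h
    have h3 : s.encard ≤ 3 :=
      (encard_le_encard_sdiff_add_encard s {x, y}).trans ((add_le_add h hxy).trans (by norm_num))
    exact absurd (hs.trans h3) (by norm_num)
  obtain ⟨b, b', ⟨hb, hbxy⟩, ⟨hb', hb'xy⟩, hbb'⟩ := one_lt_encard_iff.mp hdiff
  simp only [mem_insert_iff, mem_singleton_iff, not_or] at hbxy hb'xy
  exact ⟨b, hb, b', hb', hbb', hbxy.1, hbxy.2, hb'xy.1, hb'xy.2⟩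

lemma addEdge_comm {V : Type*} (G : SimpleGraph V) (x y : V) : addEdge G x y = addEdge G y x := by
  rw [addEdge, addEdge, Sym2.eq_swap]

lemma addEdge_adj_self {V : Type*} (G : SimpleGraph V) {x y : V} (h : x ≠ y) :
    (addEdge G x y).Adj x y := by
  simp [addEdge, h]

lemma SimpleGraph.Adj.addEdge {V : Type*} {G : SimpleGraph V} {u v : V} (h : G.Adj u v)
    (x y : V) :
    (addEdge G x y).Adj u v :=
  Or.inl h

/-- Every vertex `v` is joined to `r v`; for idempotent `r` this is a forest of stars centred at
the fixed points of `r`. -/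
def starForest {V : Type*} (r : V → V) : SimpleGraph V :=
  fromRel fun u v => r v = u

namespace starForest

variable {V : Type*} {r : V → V}

lemma adj_iff {u v : V} : (starForest r).Adj u v ↔ u ≠ v ∧ (r v = u ∨ r u = v) :=
  fromRel_adj _ u v

lemma adj_center {a w : V} (hw : r w = a) (hne : w ≠ a) : (starForest r).Adj a w :=
  adj_iff.mpr ⟨hne.symm, Or.inl hw⟩

lemma eq_center_of_adj (hr : ∀ v, r (r v) = r v) {u v : V} (h : (starForest r).Adj u v)
    (hu : r u ≠ u) : v = r u := by
  rcases adj_iff.mp h with ⟨-, rfl | h⟩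
  · exact absurd (hr v) hu
  · exact h.symm

lemma not_hasRainbowCopy_pathGraph_four (hr : ∀ v, r (r v) = r v) {α : Type*} (c : Sym2 V → α) :
    ¬ HasRainbowCopy (pathGraph 4) (starForest r) c := by
  rintro ⟨f, hf, -⟩
  have hadj : ∀ i : Fin 3, (starForest r).Adj (f i.castSucc) (f i.succ) := fun i =>
    f.map_adj (pathGraph_adj.mpr (Or.inl rfl))
  -- the middle edge has a leaf end, whose only neighbour is the other end
  rcases adj_iff.mp (hadj 1) with ⟨hne, h | h⟩
  · have := eq_center_of_adj hr (hadj 2) (h ▸ hne)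
    exact absurd (hf (this.trans h)) (by decide)
  · have := eq_center_of_adj hr (hadj 0).symm (h ▸ hne.symm)
    exact absurd (hf (this.trans h)) (by decide)

lemma exists_two_leaves (hleaves : ∀ a, r a = a → 4 ≤ {w | r w = a ∧ w ≠ a}.encard) {a : V}
    (ha : r a = a) (x y : V) :
    ∃ b b', b ≠ b' ∧ (starForest r).Adj a b ∧ (starForest r).Adj a b' ∧
      b ≠ x ∧ b ≠ y ∧ b' ≠ x ∧ b' ≠ y := by
  obtain ⟨b, ⟨hb, hba⟩, b', ⟨hb', hb'a⟩, hbb', hbx, hby, hb'x, hb'y⟩ :=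
    exists_pair_mem_of_four_le_encard (hleaves a ha) x y
  exact ⟨b, b', hbb', adj_center hb hba, adj_center hb' hb'a, hbx, hby, hb'x, hb'y⟩

lemma hasRainbowCopy_addEdge_of_leaf {α : Type*} (hr : ∀ v, r (r v) = r v)
    (hleaves : ∀ a, r a = a → 4 ≤ {w | r w = a ∧ w ≠ a}.encard) {x y : V} (hxy : x ≠ y)
    (hnadj : ¬ (starForest r).Adj x y) (hx : r x ≠ x) (c : Sym2 V → α)
    (hc : IsProperEdgeColoring (addEdge (starForest r) x y) c) :
    HasRainbowCopy (pathGraph 4) (addEdge (starForest r) x y) c := by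
  have hxa : (starForest r).Adj x (r x) := (adj_center rfl (Ne.symm hx)).symm
  have hya : y ≠ r x := by rintro rfl; exact hnadj hxa
  obtain ⟨b, b', hbb', hab, hab', hbx, hby, hb'x, hb'y⟩ := exists_two_leaves hleaves (hr x) x y
  exact hasRainbowCopy_pathGraph_four_of_fork hc (addEdge_adj_self _ hxy).symm (hxa.addEdge x y)
    hya (hab.addEdge x y) (hab'.addEdge x y) hbb' hby hbx hb'y hb'x

lemma hasRainbowCopy_addEdge_of_centers {α : Type*}
    (hleaves : ∀ a, r a = a → 4 ≤ {w | r w = a ∧ w ≠ a}.encard) {x y : V} (hxy : x ≠ y)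
    (hx : r x = x) (hy : r y = y) (c : Sym2 V → α)
    (hc : IsProperEdgeColoring (addEdge (starForest r) x y) c) :
    HasRainbowCopy (pathGraph 4) (addEdge (starForest r) x y) c := by
  obtain ⟨y', -, -, hyy', -⟩ := exists_two_leaves hleaves hy x x
  have hy'x : y' ≠ x := by
    rintro rfl
    rcases adj_iff.mp hyy' with ⟨-, h | h⟩
    · exact hxy (hx.symm.trans h)
    · exact hxy (h.symm.trans hy)
  obtain ⟨b, b', hbb', hab, hab', hby', hby, hb'y', hb'y⟩ := exists_two_leaves hleaves hx y' y
  exact hasRainbowCopy_pathGraph_four_of_fork hc (hyy'.symm.addEdge x y)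
    (addEdge_adj_self _ hxy).symm hy'x (hab.addEdge x y) (hab'.addEdge x y) hbb' hby' hby
    hb'y' hb'y

theorem rainbowSaturated_pathGraph_four [Countable V] (hr : ∀ v, r (r v) = r v)
    (hleaves : ∀ a, r a = a → 4 ≤ {w | r w = a ∧ w ≠ a}.encard) :
    RainbowSaturated (starForest r) (pathGraph 4) := by
  refine ⟨?_, fun x y hxy hnadj c hc => ?_⟩
  · obtain ⟨c, hc⟩ := Countable.exists_injective_nat (Sym2 V)
    exact ⟨c, fun e _ f _ hef _ h => hef (hc h), not_hasRainbowCopy_pathGraph_four hr c⟩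
  by_cases hx : r x = x
  · by_cases hy : r y = y
    · exact hasRainbowCopy_addEdge_of_centers hleaves hxy hx hy c hc
    rw [addEdge_comm] at hc ⊢
    exact hasRainbowCopy_addEdge_of_leaf hr hleaves hxy.symm (fun h => hnadj h.symm) hy c hc
  · exact hasRainbowCopy_addEdge_of_leaf hr hleaves hxy hnadj hx c hc

lemma ncard_edgeSet_le [Finite V] :
    (starForest r).edgeSet.ncard ≤ (Function.fixedPoints r)ᶜ.ncard := by
  have hsub : (starForest r).edgeSet ⊆ (fun v => s(v, r v)) '' (Function.fixedPoints r)ᶜ := by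
    intro e he
    induction e using Sym2.ind with
    | _ u v =>
      rw [mem_edgeSet] at he
      rcases adj_iff.mp he with ⟨hne, rfl | rfl⟩
      · exact ⟨v, hne, Sym2.eq_swap⟩
      · exact ⟨u, hne.symm, rfl⟩
  exact (ncard_le_ncard hsub).trans ncard_image_le

end starForest

/-- Vertex `i` of `Fin n` belongs to the star centred at `5 ⌊i / 5⌋`, except that the last
`n % 5` vertices join the last complete block. -/
def blockCenter (n : ℕ) (i : Fin n) : Fin n :=
  ⟨5 * min ((i : ℕ) / 5) (n / 5 - 1), by omega⟩

lemma blockCenter_idem {n : ℕ} (i : Fin n) :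
    blockCenter n (blockCenter n i) = blockCenter n i := by
  simp only [blockCenter, Fin.mk.injEq]
  omega

lemma four_le_encard_blockCenter_leaves {n : ℕ} (hn : 5 ≤ n) (a : Fin n)
    (ha : blockCenter n a = a) :
    4 ≤ {w | blockCenter n w = a ∧ w ≠ a}.encard := by
  have ha' : 5 * min ((a : ℕ) / 5) (n / 5 - 1) = a := congrArg Fin.val ha
  let leaf (k : Fin 4) : Fin n := ⟨a + k + 1, by omega⟩
  calc (4 : ℕ∞) = (univ : Set (Fin 4)).encard := by simp
    _ ≤ _ := encard_le_encard_of_injOn (f := leaf)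
      (fun k _ => by simp only [mem_ofPred_eq, blockCenter, leaf, Fin.ext_iff, ne_eq]; omega)
      (fun k _ l _ h => by simp only [leaf, Fin.ext_iff] at h ⊢; omega)

lemma le_ncard_fixedPoints_blockCenter (n : ℕ) :
    n / 5 ≤ (Function.fixedPoints (blockCenter n)).ncard := by
  let center (j : Fin (n / 5)) : Fin n := ⟨5 * j, by omega⟩
  calc n / 5 = (range center).ncard := by
        rw [ncard_range_of_injective
          (fun j k h => by simp only [center, Fin.ext_iff] at h ⊢; omega)]
        simp
    _ ≤ _ := ncard_le_ncard (by
        rintro _ ⟨j, rfl⟩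
        simp only [Function.mem_fixedPoints, Function.IsFixedPt, blockCenter, center, Fin.ext_iff]
        omega)

lemma rainbowSatNum_le {n : ℕ} {W : Type*} {H : SimpleGraph W} {G : SimpleGraph (Fin n)}
    (hG : RainbowSaturated G H) : rainbowSatNum n H ≤ G.edgeSet.ncard :=
  Nat.sInf_le ⟨G, hG, rfl⟩

theorem stmt8 (n : ℕ) (hn : 16 ≤ n) :
    (rainbowSatNum n (pathGraph 4) : ℝ) ≤ 4 / 5 * n + 16 := by
  have hsat := starForest.rainbowSaturated_pathGraph_four blockCenter_idem
    (four_le_encard_blockCenter_leaves (n := n) (by omega))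
  have hedges := (rainbowSatNum_le hsat).trans starForest.ncard_edgeSet_le
  have hcount := ncard_compl_add_ncard (Function.fixedPoints (blockCenter n))
  rw [Nat.card_eq_fintype_card, Fintype.card_fin] at hcount
  have hcenters := le_ncard_fixedPoints_blockCenter n
  have hnat : rainbowSatNum n (pathGraph 4) * 5 ≤ 4 * n + 4 := by omega
  have hreal : (rainbowSatNum n (pathGraph 4) : ℝ) * 5 ≤ 4 * n + 4 := by exact_mod_cast hnat
  linarith
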